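/- The comultiplication Δ is coassociative and cocommutative, and ε is a counit for Δ: (ε⊗id)∘Δ = id = (id⊗ε)∘Δ. -/
import Mathlib

noncomputable section

open Polynomial TensorProduct

abbrev R : Type := MvPolynomial (Fin 2) GaussianInt
abbrev aR : R := MvPolynomial.X 0
abbrev hR : R := MvPolynomial.X 1
abbrev fpoly : Polynomial R := Polynomial.X ^ 2 - Polynomial.C hR * Polynomial.X - Polynomial.C aR
abbrev A : Type := AdjoinRoot fpoly
abbrev XA : A := AdjoinRoot.root fpoly

lemma fpoly_monic : fpoly.Monic := by
  have heq : fpoly = Polynomial.X ^ 2 - (Polynomial.C hR * Polynomial.X + Polynomial.C aR) := by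
    ring
  rw [heq]
  apply Polynomial.monic_X_pow_sub
  have h1 : (Polynomial.C hR * Polynomial.X + Polynomial.C aR).degree ≤ 1 := by
    apply le_trans (Polynomial.degree_add_le _ _)
    simp only [max_le_iff]
    refine ⟨le_trans (Polynomial.degree_mul_le _ _) ?_,
      le_trans Polynomial.degree_C_le (by norm_num)⟩
    calc (Polynomial.C hR).degree + (Polynomial.X : Polynomial R).degree ≤ 0 + 1 :=
          add_le_add Polynomial.degree_C_le Polynomial.degree_X_le
      _ = 1 := by norm_num
  exact lt_of_le_of_lt h1 (by norm_num)

lemma fpoly_natDegree : fpoly.natDegree = 2 := by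
  unfold fpoly
  compute_degree!

lemma ext_A {M : Type} [AddCommMonoid M] [Module R M] {f g : A →ₗ[R] M}
    (h1 : f 1 = g 1) (hX : f XA = g XA) : f = g := by
  set pb := AdjoinRoot.powerBasis' fpoly_monic with hpb
  apply pb.basis.ext
  intro i
  rw [pb.basis_eq_pow]
  have hgen : pb.gen = XA := by rw [hpb]; rfl
  have hd : pb.dim = 2 := by rw [hpb]; exact fpoly_natDegree
  have hi : (i : ℕ) < 2 := by have := i.isLt; omega
  rw [hgen]
  interval_cases h : (i : ℕ) <;> simp [h1, hX]

set_option maxHeartbeats 1600000 in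
/-- The comultiplication `Δ` is coassociative and cocommutative, and `ε` is a counit:
`(ε⊗id)∘Δ = id = (id⊗ε)∘Δ`. -/
theorem comul_coassoc_cocomm_counit (Δ : A →ₗ[R] A ⊗[R] A) (ε : A →ₗ[R] R)
    (hΔ1 : Δ 1 = 1 ⊗ₜ XA + XA ⊗ₜ 1 - hR • (1 ⊗ₜ 1))
    (hΔX : Δ XA = XA ⊗ₜ XA + aR • (1 ⊗ₜ 1))
    (hε1 : ε 1 = 0) (hεX : ε XA = 1) :
    (TensorProduct.assoc R A A A).toLinearMap ∘ₗ (TensorProduct.map Δ LinearMap.id) ∘ₗ Δ =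
        (TensorProduct.map LinearMap.id Δ) ∘ₗ Δ ∧
      (TensorProduct.comm R A A).toLinearMap ∘ₗ Δ = Δ ∧
      (TensorProduct.lid R A).toLinearMap ∘ₗ (TensorProduct.map ε LinearMap.id) ∘ₗ Δ =
        LinearMap.id ∧
      (TensorProduct.rid R A).toLinearMap ∘ₗ (TensorProduct.map LinearMap.id ε) ∘ₗ Δ =
        LinearMap.id := by
  refine ⟨?_, ?_, ?_, ?_⟩ <;>
  · apply ext_A <;>
    · simp only [LinearMap.comp_apply, hΔ1, hΔX, hε1, hεX, map_add, map_sub, map_smul,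
        TensorProduct.map_tmul, LinearMap.id_apply, TensorProduct.assoc_tmul,
        TensorProduct.comm_tmul, TensorProduct.lid_tmul, TensorProduct.rid_tmul,
        TensorProduct.tmul_add, TensorProduct.add_tmul, TensorProduct.tmul_sub,
        TensorProduct.sub_tmul, TensorProduct.tmul_smul, ← TensorProduct.smul_tmul', LinearEquiv.coe_coe, one_smul, zero_smul, smul_zero,
        smul_add, smul_sub]
      try module
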